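/- arXiv:2303.03618 — 2 statements merged into one kernel-verified Lean document; each statement's English description precedes it below -/
import Mathlib

section
/- For any permutations w, v ∈ S_n, the Demazure product equals w ⋆ v = h_{n−1, w↖(n−1)} ∘ ⋯ ∘ h_{2, w↖2} ∘ h_{1, w↖1} (w·v), i.e. the hopping operators h_{1,w↖1}, h_{2,w↖2}, …, h_{n−1,w↖(n−1)} applied in that order to the ordinary product w·v. -/
/-!
We model the symmetric group `S_n` as the permutations of `ℕ` that fix every
point outside `[n] = {1, …, n}`; one-line notation records the values
`w 1, w 2, …, w n`, so `w⁻¹ q` is the position of the entry `q`.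
-/

/-- `w` is an element of `S_n`: it fixes everything outside `{1, …, n}`. -/
def InSymm (n : ℕ) (w : Equiv.Perm ℕ) : Prop :=
  ∀ k : ℕ, k ∉ Finset.Icc 1 n → w k = k

/-- The simple transposition `s_i = (i, i+1)`. -/
def sA (i : ℕ) : Equiv.Perm ℕ := Equiv.swap i (i + 1)

/-- One step of the hopping algorithm: among the entries `q` of the ordered
list `L` with `q > t` lying strictly to the right of `t` in the one-line
notation of `w` (i.e. `w⁻¹ t < w⁻¹ q`), pick the one occurring furthest to the
right in `L` (the last one in `L`), and swap it with `t`; if there is no such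
entry, do nothing. -/
def hopStepA (t : ℕ) (L : List ℕ) (w : Equiv.Perm ℕ) : Equiv.Perm ℕ :=
  match (L.filter fun q => decide (t < q ∧ w⁻¹ t < w⁻¹ q)).getLast? with
  | none => w
  | some q => Equiv.swap t q * w

/-- The hopping operator `h_{t,L}`: iterate the hopping step until the process
stops, i.e. until no entry of `L` greater than `t` appears to the right of
`t`.  Each effective step moves an entry of `L` from the right of `t` to its
left, so `L.length` iterations always suffice, after which the step acts as
the identity. -/
def hopA (t : ℕ) (L : List ℕ) (w : Equiv.Perm ℕ) : Equiv.Perm ℕ :=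
  (hopStepA t L)^[L.length] w

/-- The Coxeter length of an element of `S_n`: the least length of a word in
the simple transpositions `s_1, …, s_{n-1}` expressing it. -/
noncomputable def lengthA (n : ℕ) (w : Equiv.Perm ℕ) : ℕ :=
  sInf {k | ∃ l : List ℕ, l.length = k ∧ (∀ i ∈ l, 1 ≤ i ∧ i + 1 ≤ n) ∧ (l.map sA).prod = w}

/-- `w ↖ a`: the ordered list of entries of the one-line notation of `w` that
appear strictly to the left of the entry `a` and are greater than `a`. -/
def leftA (w : Equiv.Perm ℕ) (a : ℕ) : List ℕ :=
  ((List.range (w⁻¹ a - 1)).map fun p => w (p + 1)).filter fun q => decide (a < q)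

/-!
Write `condSwap t q x` for `x` with the entries `t` and `q` exchanged when `t` stands left of
`q`. Every hop moves `t` to the right, so the hopping operator `h_{t,L}` is the composite of the
`condSwap t q` for `q` in `L`, read from right to left; and since the Coxeter length is the
number of inversions, `s_k ⋆ u = condSwap k (k+1) u`.

Induct on the length of `w`. If `k + 1` stands left of `k` in `w`, then
`w ⋆ v = s_k ⋆ (s_k w ⋆ v)`, so it suffices that the hopping stages of `w` applied to `s_k x`
give `condSwap k (k+1)` applied to the stages of `s_k w` on `x`. The stages `t < k` are
conjugated by `s_k`, since `w↖t` is `s_k w↖t` relabelled by `s_k`; the stages `t > k + 1` have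
the same lists and commute with `condSwap k (k+1)`. For the two middle stages,
`w↖(k+1) = s_k w↖k = A`, `w↖k = A ++ (k+1) :: M` and `s_k w↖(k+1) = A ++ M`, and they are
handled by the braid-like relation among conditional swaps of three entries.
-/

open Equiv

def condSwap (t q : ℕ) (x : Perm ℕ) : Perm ℕ :=
  if x⁻¹ t < x⁻¹ q then swap t q * x else x

def hopFold (t : ℕ) (L : List ℕ) (x : Perm ℕ) : Perm ℕ :=
  L.foldr (condSwap t) x

lemma swap_mul_inv_apply (a b : ℕ) (x : Perm ℕ) (c : ℕ) :
    (swap a b * x)⁻¹ c = x⁻¹ (swap a b c) := by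
  simp [mul_inv_rev, swap_inv]

lemma condSwap_of_lt {t q : ℕ} {x : Perm ℕ} (h : x⁻¹ t < x⁻¹ q) :
    condSwap t q x = swap t q * x :=
  if_pos h

lemma condSwap_of_not_lt {t q : ℕ} {x : Perm ℕ} (h : ¬x⁻¹ t < x⁻¹ q) :
    condSwap t q x = x :=
  if_neg h

lemma hopFold_cons (t q : ℕ) (L : List ℕ) (x : Perm ℕ) :
    hopFold t (q :: L) x = condSwap t q (hopFold t L x) :=
  rfl

lemma hopFold_append (t : ℕ) (L L' : List ℕ) (x : Perm ℕ) :
    hopFold t (L ++ L') x = hopFold t L (hopFold t L' x) :=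
  List.foldr_append

lemma condSwap_conj (σ : Perm ℕ) (t q : ℕ) (x : Perm ℕ) :
    condSwap (σ t) (σ q) (σ * x) = σ * condSwap t q x := by
  have h (c : ℕ) : (σ * x)⁻¹ (σ c) = x⁻¹ c := by simp [mul_inv_rev]
  simp only [condSwap, h]
  split_ifs
  · rw [swap_apply_apply]; group
  · rfl

lemma hopFold_conj (σ : Perm ℕ) (t : ℕ) (L : List ℕ) (x : Perm ℕ) :
    hopFold (σ t) (L.map σ) (σ * x) = σ * hopFold t L x := by
  induction L with
  | nil => rfl
  | cons q L ih => rw [List.map_cons, hopFold_cons, ih, condSwap_conj, hopFold_cons]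

lemma condSwap_comm {t q t' q' : ℕ} (h₁ : t ≠ t') (h₂ : t ≠ q') (h₃ : q ≠ t') (h₄ : q ≠ q')
    (x : Perm ℕ) : condSwap t q (condSwap t' q' x) = condSwap t' q' (condSwap t q x) := by
  have e₁ : swap t' q' t = t := swap_apply_of_ne_of_ne h₁ h₂
  have e₂ : swap t' q' q = q := swap_apply_of_ne_of_ne h₃ h₄
  have e₃ : swap t q t' = t' := swap_apply_of_ne_of_ne h₁.symm h₃.symm
  have e₄ : swap t q q' = q' := swap_apply_of_ne_of_ne h₂.symm h₄.symm
  unfold condSwap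
  split_ifs at * <;> simp only [swap_mul_inv_apply, e₁, e₂, e₃, e₄] at * <;>
    first | omega | (ext c; simp only [Perm.mul_apply, swap_apply_def]; split_ifs <;> omega)

lemma condSwap_hopFold_comm {t q t' : ℕ} {L : List ℕ} (ht : t ∉ t' :: L) (hq : q ∉ t' :: L)
    (x : Perm ℕ) : condSwap t q (hopFold t' L x) = hopFold t' L (condSwap t q x) := by
  simp only [List.mem_cons, not_or] at ht hq
  induction L with
  | nil => rfl
  | cons q' L ih =>
    simp only [List.mem_cons, not_or] at ht hq
    rw [hopFold_cons, hopFold_cons, condSwap_comm ht.1 ht.2.1 hq.1 hq.2.1,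
      ih ⟨ht.1, ht.2.2⟩ ⟨hq.1, hq.2.2⟩]

lemma hopFold_comm {t t' : ℕ} {L L' : List ℕ} (ht : t ∉ t' :: L') (hL : ∀ q ∈ L, q ∉ t' :: L')
    (x : Perm ℕ) : hopFold t L (hopFold t' L' x) = hopFold t' L' (hopFold t L x) := by
  induction L with
  | nil => rfl
  | cons q L ih =>
    rw [hopFold_cons, hopFold_cons, ih fun r hr => hL r (List.mem_cons_of_mem q hr),
      condSwap_hopFold_comm ht (hL q List.mem_cons_self)]

/-- Both sides only depend on the relative positions of `t`, `t'` and `a` in `x`; this checks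
the six cases. -/
lemma condSwap_braid {t t' a : ℕ} (h₁ : t ≠ t') (h₂ : t ≠ a) (h₃ : t' ≠ a) (x : Perm ℕ) :
    condSwap t t' (condSwap t' a (condSwap t a x)) =
      condSwap t' a (condSwap t a (condSwap t t' x)) := by
  have := x⁻¹.injective.ne h₁; have := x⁻¹.injective.ne h₂; have := x⁻¹.injective.ne h₃
  have e₁ : swap t a t' = t' := swap_apply_of_ne_of_ne h₁.symm h₃
  have e₂ : swap t' a t = t := swap_apply_of_ne_of_ne h₁ h₂
  have e₃ : swap t t' a = a := swap_apply_of_ne_of_ne h₂.symm h₃.symm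
  unfold condSwap
  split_ifs at * <;>
    simp only [swap_mul_inv_apply, swap_apply_left, swap_apply_right, e₁, e₂, e₃] at * <;>
    first | omega | (ext c; simp only [Perm.mul_apply, swap_apply_def]; split_ifs <;> omega)

lemma condSwap_swap_mul {t q : ℕ} (h : t ≠ q) (x : Perm ℕ) :
    condSwap t q (swap t q * x) = condSwap t q x := by
  have := x⁻¹.injective.ne h
  unfold condSwap
  rw [swap_mul_inv_apply, swap_mul_inv_apply, swap_apply_left, swap_apply_right]
  split_ifs
  · omega
  · rw [swap_mul_self_mul]
  · rfl
  · omega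

lemma hopFold_hopFold_condSwap {t t' : ℕ} {A : List ℕ} (hA : A.Nodup) (h : t ≠ t')
    (ht : t ∉ A) (ht' : t' ∉ A) (x : Perm ℕ) :
    hopFold t' A (hopFold t A (condSwap t t' x)) =
      condSwap t t' (hopFold t' A (hopFold t A x)) := by
  induction A generalizing x with
  | nil => rfl
  | cons a A ih =>
    simp only [List.mem_cons, not_or, List.nodup_cons] at ht ht' hA
    have hcomm (y : Perm ℕ) : hopFold t' (a :: A) (hopFold t (a :: A) y) =
        condSwap t' a (condSwap t a (hopFold t' A (hopFold t A y))) := by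
      rw [hopFold_cons, hopFold_cons, ← condSwap_hopFold_comm (t := t) (q := a)
        (by simp [h, ht.2]) (by simp [Ne.symm ht'.1, hA.1])]
    rw [hcomm, hcomm, ih hA.2 ht.2 ht'.2, condSwap_braid h ht.1 ht'.1]

lemma hopFold_hopFold_swap_mul {t t' : ℕ} {A M : List ℕ} (hAM : (A ++ M).Nodup) (h : t ≠ t')
    (ht : t ∉ A ++ M) (ht' : t' ∉ A ++ M) (y : Perm ℕ) :
    hopFold t' A (hopFold t (A ++ t' :: M) (swap t t' * y)) =
      condSwap t t' (hopFold t' (A ++ M) (hopFold t A y)) := by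
  simp only [List.mem_append, not_or] at ht ht'
  have hM : M.map (swap t t') = M :=
    (List.map_congr_left fun q hq => swap_apply_of_ne_of_ne (by rintro rfl; exact ht.2 hq)
      (by rintro rfl; exact ht'.2 hq)).trans (List.map_id M)
  have hconj : hopFold t M (swap t t' * y) = swap t t' * hopFold t' M y := by
    simpa [hM] using hopFold_conj (swap t t') t' M y
  have hdisj : ∀ q ∈ A, q ∉ t' :: M := fun q hq hq' =>
    (List.mem_cons.1 hq').elim (fun e => ht'.1 (e ▸ hq))
      (fun hqM => List.disjoint_of_nodup_append hAM hq hqM)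
  rw [hopFold_append, hopFold_cons, hconj, condSwap_swap_mul h,
    hopFold_hopFold_condSwap (List.nodup_append.1 hAM).1 h ht.1 ht'.1,
    hopFold_comm (by simp [h, ht.2]) hdisj, ← hopFold_append]

lemma hopStepA_concat_of_lt {t q : ℕ} (L : List ℕ) {x : Perm ℕ} (htq : t < q)
    (h : x⁻¹ t < x⁻¹ q) : hopStepA t (L ++ [q]) x = swap t q * x := by
  rw [hopStepA, List.filter_append, List.filter_cons_of_pos (by simpa using ⟨htq, h⟩),
    List.filter_nil, List.getLast?_concat]

lemma hopStepA_concat_of_not_lt {t q : ℕ} (L : List ℕ) {x : Perm ℕ} (h : ¬x⁻¹ t < x⁻¹ q) :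
    hopStepA t (L ++ [q]) x = hopStepA t L x := by
  rw [hopStepA, List.filter_append,
    List.filter_cons_of_neg (by rw [decide_eq_true_eq]; exact fun h' => h h'.2),
    List.filter_nil, List.append_nil, hopStepA]

/-- A hopping step only moves `t` to the right, so an entry left of `t` stays left of it. -/
lemma not_lt_inv_hopStepA {t q : ℕ} (L : List ℕ) {x : Perm ℕ} (htq : t < q)
    (h : ¬x⁻¹ t < x⁻¹ q) : ¬(hopStepA t L x)⁻¹ t < (hopStepA t L x)⁻¹ q := by
  unfold hopStepA
  split
  · exact h
  · rename_i r hr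
    obtain ⟨-, hr⟩ := List.mem_filter.1 (List.mem_of_getLast? hr)
    rw [decide_eq_true_eq] at hr
    obtain ⟨htr, hr⟩ := hr
    have hqr : q ≠ r := by rintro rfl; exact h hr
    rw [swap_mul_inv_apply, swap_mul_inv_apply, swap_apply_left,
      swap_apply_of_ne_of_ne (by omega) hqr]
    omega

lemma iterate_hopStepA_concat {t q : ℕ} (L : List ℕ) (htq : t < q) (m : ℕ) {x : Perm ℕ}
    (h : ¬x⁻¹ t < x⁻¹ q) : (hopStepA t (L ++ [q]))^[m] x = (hopStepA t L)^[m] x := by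
  induction m generalizing x with
  | zero => rfl
  | succ m ih =>
    rw [Function.iterate_succ_apply, Function.iterate_succ_apply,
      hopStepA_concat_of_not_lt L h, ih (not_lt_inv_hopStepA L htq h)]

lemma iterate_hopStepA_eq_hopFold {t : ℕ} {L : List ℕ} (hL : ∀ q ∈ L, t < q) {m : ℕ}
    (hm : L.length ≤ m) (x : Perm ℕ) : (hopStepA t L)^[m] x = hopFold t L x := by
  induction L using List.reverseRecOn generalizing m x with
  | nil => exact Function.iterate_fixed (f := hopStepA t []) rfl m
  | append_singleton L q ih =>
    have htq := hL q (by simp)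
    have hL' : ∀ r ∈ L, t < r := fun r hr => hL r (by simp [hr])
    rw [List.length_append, List.length_singleton] at hm
    rw [hopFold_append]
    change _ = hopFold t L (condSwap t q x)
    by_cases h : x⁻¹ t < x⁻¹ q
    · obtain ⟨m, rfl⟩ : ∃ m', m = m' + 1 := ⟨m - 1, by omega⟩
      have hq : ¬(swap t q * x)⁻¹ t < (swap t q * x)⁻¹ q := by
        rw [swap_mul_inv_apply, swap_mul_inv_apply, swap_apply_left, swap_apply_right]
        omega
      rw [Function.iterate_succ_apply, hopStepA_concat_of_lt L htq h,
        iterate_hopStepA_concat L htq m hq, ih hL' (by omega), condSwap_of_lt h]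
    · rw [iterate_hopStepA_concat L htq m h, ih hL' (by omega), condSwap_of_not_lt h]

lemma hopA_eq_hopFold {t : ℕ} {L : List ℕ} (hL : ∀ q ∈ L, t < q) (x : Perm ℕ) :
    hopA t L x = hopFold t L x :=
  iterate_hopStepA_eq_hopFold hL le_rfl x

namespace InSymm

variable {n : ℕ} {w v : Perm ℕ}

lemma apply_mem (hw : InSymm n w) {c : ℕ} (hc : c ∈ Finset.Icc 1 n) : w c ∈ Finset.Icc 1 n := by
  by_contra h
  rw [w.injective (hw _ h)] at h
  exact h hc

lemma inv (hw : InSymm n w) : InSymm n w⁻¹ :=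
  fun k hk => by rw [Perm.inv_eq_iff_eq, hw k hk]

lemma inv_apply_mem (hw : InSymm n w) {c : ℕ} (hc : c ∈ Finset.Icc 1 n) :
    w⁻¹ c ∈ Finset.Icc 1 n :=
  hw.inv.apply_mem hc

lemma mul (hw : InSymm n w) (hv : InSymm n v) : InSymm n (w * v) :=
  fun k hk => by rw [Perm.mul_apply, hv k hk, hw k hk]

end InSymm

lemma inSymm_swap {n t q : ℕ} (ht : t ∈ Finset.Icc 1 n) (hq : q ∈ Finset.Icc 1 n) :
    InSymm n (swap t q) :=
  fun _ hk => swap_apply_of_ne_of_ne (by rintro rfl; exact hk ht) (by rintro rfl; exact hk hq)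

lemma inSymm_sA {n k : ℕ} (hk : 1 ≤ k) (hkn : k + 1 ≤ n) : InSymm n (sA k) :=
  inSymm_swap (Finset.mem_Icc.2 ⟨hk, by omega⟩) (Finset.mem_Icc.2 ⟨by omega, hkn⟩)

lemma InSymm.condSwap {n : ℕ} {x : Perm ℕ} (hx : InSymm n x) {t q : ℕ}
    (ht : t ∈ Finset.Icc 1 n) (hq : q ∈ Finset.Icc 1 n) : InSymm n (condSwap t q x) := by
  by_cases h : x⁻¹ t < x⁻¹ q
  · rw [condSwap_of_lt h]
    exact (inSymm_swap ht hq).mul hx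
  · rwa [condSwap_of_not_lt h]

lemma InSymm.hopFold {n : ℕ} {x : Perm ℕ} (hx : InSymm n x) {t : ℕ} {L : List ℕ}
    (ht : t ∈ Finset.Icc 1 n) (hL : ∀ q ∈ L, q ∈ Finset.Icc 1 n) : InSymm n (hopFold t L x) := by
  induction L with
  | nil => exact hx
  | cons q L ih =>
    exact (ih fun r hr => hL r (List.mem_cons_of_mem q hr)).condSwap ht (hL q List.mem_cons_self)

lemma sA_mul_sA_mul (k : ℕ) (u : Perm ℕ) : sA k * (sA k * u) = u :=
  swap_mul_self_mul k (k + 1) u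

lemma sA_mul_inv_apply_left (k : ℕ) (u : Perm ℕ) : (sA k * u)⁻¹ k = u⁻¹ (k + 1) := by
  rw [sA, swap_mul_inv_apply, swap_apply_left]

lemma sA_mul_inv_apply_right (k : ℕ) (u : Perm ℕ) : (sA k * u)⁻¹ (k + 1) = u⁻¹ k := by
  rw [sA, swap_mul_inv_apply, swap_apply_right]

lemma sA_mul_inv_apply_of_ne {k a : ℕ} (ha : a ≠ k) (ha' : a ≠ k + 1) (u : Perm ℕ) :
    (sA k * u)⁻¹ a = u⁻¹ a := by
  rw [sA, swap_mul_inv_apply, swap_apply_of_ne_of_ne ha ha']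

lemma map_sA_of_forall_ne {k : ℕ} {L : List ℕ} (h : ∀ q ∈ L, q ≠ k ∧ q ≠ k + 1) :
    L.map (sA k) = L :=
  (List.map_congr_left fun q hq => swap_apply_of_ne_of_ne (h q hq).1 (h q hq).2).trans
    (List.map_id L)

lemma leftA_eq_filter (w : Perm ℕ) (a : ℕ) :
    leftA w a = ((List.range' 1 (w⁻¹ a - 1)).map w).filter (a < ·) := by
  rw [leftA, List.range'_eq_map_range, List.map_map]
  congr 2
  funext p
  rw [Function.comp_apply, Nat.add_comm]

lemma lt_of_mem_leftA {w : Perm ℕ} {a q : ℕ} (h : q ∈ leftA w a) : a < q := by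
  simpa using (List.mem_filter.1 h).2

lemma nodup_leftA (w : Perm ℕ) (a : ℕ) : (leftA w a).Nodup := by
  rw [leftA_eq_filter]
  exact ((List.nodup_range').map w.injective).filter _

lemma InSymm.mem_Icc_of_mem_leftA {n : ℕ} {w : Perm ℕ} (hw : InSymm n w) {a q : ℕ}
    (ha : a ∈ Finset.Icc 1 n) (hq : q ∈ leftA w a) : q ∈ Finset.Icc 1 n := by
  rw [leftA_eq_filter] at hq
  obtain ⟨p, hp, rfl⟩ := List.mem_map.1 (List.mem_of_mem_filter hq)
  have := Finset.mem_Icc.1 (hw.inv_apply_mem ha)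
  rw [List.mem_range'_1] at hp
  exact hw.apply_mem (Finset.mem_Icc.2 (by omega))

lemma InSymm.leftA_eq_nil {n : ℕ} {w : Perm ℕ} (hw : InSymm n w) (hn : 1 ≤ n) :
    leftA w n = [] :=
  List.eq_nil_iff_forall_not_mem.2 fun q hq => by
    have := lt_of_mem_leftA hq
    have := Finset.mem_Icc.1 (hw.mem_Icc_of_mem_leftA (Finset.mem_Icc.2 ⟨hn, le_rfl⟩) hq)
    omega

lemma leftA_one (a : ℕ) : leftA 1 a = [] :=
  List.eq_nil_iff_forall_not_mem.2 fun q hq => by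
    rw [leftA_eq_filter] at hq
    simp only [inv_one, Perm.coe_one, id_eq, List.map_id, List.mem_filter, List.mem_range'_1,
      decide_eq_true_eq] at hq
    omega

lemma leftA_sA_mul {k a : ℕ} (ha : a ≠ k) (ha' : a ≠ k + 1) (w : Perm ℕ) :
    leftA (sA k * w) a = (leftA w a).map (sA k) := by
  rw [leftA_eq_filter, leftA_eq_filter, sA_mul_inv_apply_of_ne ha ha', Perm.coe_mul,
    ← List.map_map, List.filter_map]
  congr 2
  funext q
  simp only [Function.comp_apply, sA, swap_apply_def]
  split_ifs <;> simp only [decide_eq_decide] <;> omega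

lemma filter_lt_eq_filter_succ_lt {k : ℕ} {L : List ℕ} (h : k + 1 ∉ L) :
    L.filter (k < ·) = L.filter (k + 1 < ·) :=
  List.filter_congr fun q hq => by
    have : q ≠ k + 1 := by rintro rfl; exact h hq
    simp only [decide_eq_decide]
    omega

/-- `A` collects the entries greater than `k + 1` standing left of `k + 1` in `w`, and `M`
those standing between `k + 1` and `k`. -/
lemma exists_leftA_of_descent {w : Perm ℕ} {k : ℕ} (hpos : 1 ≤ w⁻¹ (k + 1))
    (hdesc : w⁻¹ (k + 1) < w⁻¹ k) :
    ∃ A M : List ℕ, leftA w (k + 1) = A ∧ leftA (sA k * w) k = A ∧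
      leftA (sA k * w) (k + 1) = A ++ M ∧ leftA w k = A ++ (k + 1) :: M := by
  set p := w⁻¹ (k + 1) with hp
  set P := (List.range' 1 (p - 1)).map w
  set P' := (List.range' (p + 1) (w⁻¹ k - 1 - p)).map w
  have hsplit : (List.range' 1 (w⁻¹ k - 1)).map w = P ++ (k + 1) :: P' := by
    have : w⁻¹ k - 1 = (p - 1) + (w⁻¹ k - 1 - p + 1) := by omega
    rw [this, ← List.range'_append_1, List.range'_succ, List.map_append, List.map_cons,
      show 1 + (p - 1) = p by omega, hp, Perm.eq_inv_iff_eq.1 rfl]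
  have hne : ∀ q ∈ P ++ P', q ≠ k ∧ q ≠ k + 1 := by
    intro q hq
    simp only [P, P', List.mem_append, List.mem_map, List.mem_range'_1] at hq
    obtain ⟨j, hj, rfl⟩ | ⟨j, hj, rfl⟩ := hq <;>
      exact ⟨fun h => by have := Perm.inv_eq_iff_eq.2 h.symm; omega,
        fun h => by have := Perm.inv_eq_iff_eq.2 h.symm; omega⟩
  have hP : P.map (sA k) = P := map_sA_of_forall_ne fun q hq => hne q (List.mem_append_left _ hq)
  have hP' : P'.map (sA k) = P' :=
    map_sA_of_forall_ne fun q hq => hne q (List.mem_append_right _ hq)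
  have hPk : k + 1 ∉ P := fun h => (hne _ (List.mem_append_left _ h)).2 rfl
  have hP'k : k + 1 ∉ P' := fun h => (hne _ (List.mem_append_right _ h)).2 rfl
  refine ⟨P.filter (k + 1 < ·), P'.filter (k + 1 < ·), leftA_eq_filter w (k + 1), ?_, ?_, ?_⟩
  · rw [leftA_eq_filter, sA_mul_inv_apply_left, Perm.coe_mul, ← List.map_map, hP,
      filter_lt_eq_filter_succ_lt hPk]
  · rw [leftA_eq_filter, sA_mul_inv_apply_right, Perm.coe_mul, ← List.map_map, hsplit,
      List.map_append, List.map_cons, hP, hP', sA, swap_apply_right, List.filter_append,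
      List.filter_cons_of_neg (by simp)]
  · rw [leftA_eq_filter, hsplit, List.filter_append, List.filter_cons_of_pos (by simp),
      filter_lt_eq_filter_succ_lt hPk, filter_lt_eq_filter_succ_lt hP'k]

def inversions (n : ℕ) (u : Perm ℕ) : Finset (ℕ × ℕ) :=
  (Finset.Icc 1 n ×ˢ Finset.Icc 1 n).filter fun p => p.1 < p.2 ∧ u p.2 < u p.1

lemma inversions_sA_mul_of_lt {n k : ℕ} {u : Perm ℕ} (hk : 1 ≤ k) (hkn : k + 1 ≤ n)
    (hu : InSymm n u) (hlt : u⁻¹ k < u⁻¹ (k + 1)) :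
    inversions n (sA k * u) = insert (u⁻¹ k, u⁻¹ (k + 1)) (inversions n u) := by
  have h₁ := Finset.mem_Icc.1 (hu.inv_apply_mem (Finset.mem_Icc.2 ⟨hk, by omega⟩))
  have h₂ := Finset.mem_Icc.1 (hu.inv_apply_mem (Finset.mem_Icc.2 ⟨by omega, hkn⟩))
  ext ⟨i, j⟩
  rw [inversions, inversions, Finset.mem_insert, Finset.mem_filter, Finset.mem_filter]
  simp only [Finset.mem_product, Prod.mk.injEq, Finset.mem_Icc, Perm.mul_apply, sA,
    swap_apply_def, Perm.eq_inv_iff_eq]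
  constructor
  · rintro ⟨hij, hlt', hswap⟩
    split_ifs at hswap <;> omega
  · rintro (⟨hi, hj⟩ | ⟨hij, hlt', hinv⟩)
    · rw [← Perm.eq_inv_iff_eq.2 hi, ← Perm.eq_inv_iff_eq.2 hj] at *
      split_ifs <;> omega
    · have hpos (c d : ℕ) (hc : u c = k) (hd : u d = k + 1) : c < d := by
        rwa [Perm.eq_inv_iff_eq.2 hc, Perm.eq_inv_iff_eq.2 hd]
      split_ifs <;> first | omega | exact absurd (hpos j i ‹_› ‹_›) (by omega)

lemma card_inversions_sA_mul_of_lt {n k : ℕ} {u : Perm ℕ} (hk : 1 ≤ k) (hkn : k + 1 ≤ n)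
    (hu : InSymm n u) (hlt : u⁻¹ k < u⁻¹ (k + 1)) :
    (inversions n (sA k * u)).card = (inversions n u).card + 1 := by
  rw [inversions_sA_mul_of_lt hk hkn hu hlt, Finset.card_insert_of_notMem]
  simp [inversions]

lemma card_inversions_of_descent {n k : ℕ} {u : Perm ℕ} (hk : 1 ≤ k) (hkn : k + 1 ≤ n)
    (hu : InSymm n u) (hdesc : u⁻¹ (k + 1) < u⁻¹ k) :
    (inversions n u).card = (inversions n (sA k * u)).card + 1 := by
  have := card_inversions_sA_mul_of_lt hk hkn ((inSymm_sA hk hkn).mul hu)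
    (by rwa [sA_mul_inv_apply_left, sA_mul_inv_apply_right])
  rwa [sA_mul_sA_mul] at this

lemma InSymm.eq_one_of_forall_lt {n : ℕ} {u : Perm ℕ} (hu : InSymm n u)
    (h : ∀ k, 1 ≤ k → k + 1 ≤ n → u⁻¹ k < u⁻¹ (k + 1)) : u = 1 := by
  have hmem (j : ℕ) (hj : 1 ≤ j) (hjn : j ≤ n) :=
    Finset.mem_Icc.1 (hu.inv_apply_mem (Finset.mem_Icc.2 ⟨hj, hjn⟩))
  have hge (j : ℕ) (hj : 1 ≤ j) : j ≤ n → j ≤ u⁻¹ j := by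
    induction j, hj using Nat.le_induction with
    | base => exact fun hn => (hmem 1 le_rfl hn).1
    | succ j hj ih => exact fun hjn => by have := h j hj hjn; have := ih (by omega); omega
  have hle (d j : ℕ) (hj : 1 ≤ j) (hjn : j + d = n) : u⁻¹ j ≤ j := by
    induction d generalizing j with
    | zero => have := (hmem j hj (by omega)).2; omega
    | succ d ih => have := h j hj (by omega); have := ih (j + 1) (by omega) (by omega); omega
  ext c
  rw [Perm.one_apply]
  by_cases hc : c ∈ Finset.Icc 1 n
  · obtain ⟨hc, hcn⟩ := Finset.mem_Icc.1 hc
    have := hle (n - c) c hc (by omega)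
    have := hge c hc hcn
    exact (Perm.inv_eq_iff_eq.1 (by omega)).symm
  · exact hu c hc

@[elab_as_elim]
lemma InSymm.induction_on_descent {n : ℕ} {P : Perm ℕ → Prop} (one : P 1)
    (step : ∀ k w, 1 ≤ k → k + 1 ≤ n → InSymm n w → w⁻¹ (k + 1) < w⁻¹ k → P (sA k * w) → P w)
    (w : Perm ℕ) (hw : InSymm n w) : P w := by
  induction h : (inversions n w).card using Nat.strong_induction_on generalizing w with
  | _ m ih =>
    by_cases hdesc : ∃ k, 1 ≤ k ∧ k + 1 ≤ n ∧ w⁻¹ (k + 1) < w⁻¹ k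
    · obtain ⟨k, hk, hkn, hdesc⟩ := hdesc
      have := card_inversions_of_descent hk hkn hw hdesc
      exact step k w hk hkn hw hdesc (ih _ (by omega) _ ((inSymm_sA hk hkn).mul hw) rfl)
    · push Not at hdesc
      rw [hw.eq_one_of_forall_lt fun k hk hkn =>
        (hdesc k hk hkn).lt_of_ne (w⁻¹.injective.ne (by omega))]
      exact one

lemma card_inversions_one (n : ℕ) : (inversions n 1).card = 0 := by
  rw [Finset.card_eq_zero, inversions, Finset.filter_eq_empty_iff]
  intro p _
  simp only [Perm.one_apply]
  omega

lemma inSymm_prod_map_sA {n : ℕ} (l : List ℕ) (hl : ∀ i ∈ l, 1 ≤ i ∧ i + 1 ≤ n) :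
    InSymm n (l.map sA).prod := by
  induction l with
  | nil => exact fun _ _ => rfl
  | cons k l ih =>
    obtain ⟨⟨hk, hkn⟩, hl⟩ := List.forall_mem_cons.1 hl
    exact (inSymm_sA hk hkn).mul (ih hl)

lemma card_inversions_prod_map_sA_le {n : ℕ} (l : List ℕ) (hl : ∀ i ∈ l, 1 ≤ i ∧ i + 1 ≤ n) :
    (inversions n (l.map sA).prod).card ≤ l.length := by
  induction l with
  | nil => simp [card_inversions_one]
  | cons k l ih =>
    obtain ⟨⟨hk, hkn⟩, hl'⟩ := List.forall_mem_cons.1 hl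
    have hu := inSymm_prod_map_sA l hl'
    rw [List.map_cons, List.prod_cons, List.length_cons]
    have := ih hl'
    rcases lt_or_gt_of_ne ((l.map sA).prod⁻¹.injective.ne (show k ≠ k + 1 by omega)) with h | h
    · rw [card_inversions_sA_mul_of_lt hk hkn hu h]
      omega
    · have := card_inversions_of_descent hk hkn hu h
      omega

lemma InSymm.exists_word_length_eq {n : ℕ} {u : Perm ℕ} (hu : InSymm n u) :
    ∃ l : List ℕ, l.length = (inversions n u).card ∧ (∀ i ∈ l, 1 ≤ i ∧ i + 1 ≤ n) ∧
      (l.map sA).prod = u := by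
  refine InSymm.induction_on_descent ⟨[], by simp [card_inversions_one], by simp, rfl⟩
    (fun k w hk hkn hw hdesc ⟨l, hlen, hl, hprod⟩ => ⟨k :: l, ?_, ?_, ?_⟩) u hu
  · rw [List.length_cons, hlen, card_inversions_of_descent hk hkn hw hdesc]
  · exact List.forall_mem_cons.2 ⟨⟨hk, hkn⟩, hl⟩
  · rw [List.map_cons, List.prod_cons, hprod, sA_mul_sA_mul]

lemma InSymm.lengthA_eq_card_inversions {n : ℕ} {u : Perm ℕ} (hu : InSymm n u) :
    lengthA n u = (inversions n u).card := by
  obtain ⟨l, hlen, hl, hprod⟩ := hu.exists_word_length_eq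
  refine le_antisymm (Nat.sInf_le ⟨l, hlen, hl, hprod⟩) (le_csInf ⟨_, l, hlen, hl, hprod⟩ ?_)
  rintro _ ⟨l', rfl, hl', rfl⟩
  exact card_inversions_prod_map_sA_le l' hl'

lemma InSymm.lengthA_lt_lengthA_sA_mul_iff {n k : ℕ} {u : Perm ℕ} (hu : InSymm n u)
    (hk : 1 ≤ k) (hkn : k + 1 ≤ n) :
    lengthA n u < lengthA n (sA k * u) ↔ u⁻¹ k < u⁻¹ (k + 1) := by
  rw [hu.lengthA_eq_card_inversions, ((inSymm_sA hk hkn).mul hu).lengthA_eq_card_inversions]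
  rcases lt_or_gt_of_ne (u⁻¹.injective.ne (show k ≠ k + 1 by omega)) with h | h
  · rw [card_inversions_sA_mul_of_lt hk hkn hu h]
    exact iff_of_true (by omega) h
  · have := card_inversions_of_descent hk hkn hu h
    constructor <;> intro <;> omega

def hopStages (w : Perm ℕ) (l : List ℕ) (x : Perm ℕ) : Perm ℕ :=
  l.foldl (fun u t => hopFold t (leftA w t) u) x

lemma hopStages_append (w : Perm ℕ) (l l' : List ℕ) (x : Perm ℕ) :
    hopStages w (l ++ l') x = hopStages w l' (hopStages w l x) :=
  List.foldl_append

lemma hopStages_one (l : List ℕ) (x : Perm ℕ) : hopStages 1 l x = x :=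
  List.foldl_fixed' (fun t => by rw [leftA_one]; rfl) l

lemma InSymm.hopStages {n : ℕ} {w x : Perm ℕ} (hw : InSymm n w) (hx : InSymm n x) {l : List ℕ}
    (hl : ∀ t ∈ l, t ∈ Finset.Icc 1 n) : InSymm n (hopStages w l x) := by
  induction l generalizing x with
  | nil => exact hx
  | cons t l ih =>
    obtain ⟨ht, hl⟩ := List.forall_mem_cons.1 hl
    exact ih (hx.hopFold ht fun q => hw.mem_Icc_of_mem_leftA ht) hl

lemma hopStages_sA_mul_of_ne {k : ℕ} {l : List ℕ} (hl : ∀ t ∈ l, t ≠ k ∧ t ≠ k + 1)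
    (w y : Perm ℕ) : hopStages w l (sA k * y) = sA k * hopStages (sA k * w) l y := by
  induction l generalizing y with
  | nil => rfl
  | cons t l ih =>
    obtain ⟨⟨htk, htk'⟩, hl⟩ := List.forall_mem_cons.1 hl
    have hstage : hopFold t (leftA w t) (sA k * y) = sA k * hopFold t (leftA (sA k * w) t) y := by
      have := hopFold_conj (sA k) t (leftA (sA k * w) t) y
      rwa [← leftA_sA_mul htk htk', sA_mul_sA_mul, sA, swap_apply_of_ne_of_ne htk htk'] at this
    exact (congrArg (hopStages w l) hstage).trans (ih hl _)

lemma hopStages_condSwap_of_lt {k : ℕ} {l : List ℕ} (hl : ∀ t ∈ l, k + 1 < t) (w y : Perm ℕ) :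
    hopStages w l (condSwap k (k + 1) y) = condSwap k (k + 1) (hopStages (sA k * w) l y) := by
  induction l generalizing y with
  | nil => rfl
  | cons t l ih =>
    obtain ⟨ht, hl⟩ := List.forall_mem_cons.1 hl
    have hleft : leftA w t = leftA (sA k * w) t := by
      rw [leftA_sA_mul (by omega) (by omega), map_sA_of_forall_ne fun q hq => by
        have := lt_of_mem_leftA hq; omega]
    have hstage : hopFold t (leftA w t) (condSwap k (k + 1) y) =
        condSwap k (k + 1) (hopFold t (leftA (sA k * w) t) y) := by
      rw [hleft, condSwap_hopFold_comm] <;>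
        simp only [List.mem_cons, not_or] <;>
        exact ⟨by omega, fun h => by have := lt_of_mem_leftA h; omega⟩
    exact (congrArg (hopStages w l) hstage).trans (ih hl _)

lemma hopStages_pair_sA_mul {w : Perm ℕ} {k : ℕ} (hpos : 1 ≤ w⁻¹ (k + 1))
    (hdesc : w⁻¹ (k + 1) < w⁻¹ k) (y : Perm ℕ) :
    hopStages w [k, k + 1] (sA k * y) = condSwap k (k + 1) (hopStages (sA k * w) [k, k + 1] y) := by
  obtain ⟨A, M, h₁, h₂, h₃, h₄⟩ := exists_leftA_of_descent hpos hdesc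
  have hgt : ∀ q ∈ A ++ M, k + 1 < q := fun q hq => lt_of_mem_leftA (h₃ ▸ hq)
  change hopFold (k + 1) (leftA w (k + 1)) (hopFold k (leftA w k) (swap k (k + 1) * y)) =
    condSwap k (k + 1)
      (hopFold (k + 1) (leftA (sA k * w) (k + 1)) (hopFold k (leftA (sA k * w) k) y))
  rw [h₁, h₂, h₃, h₄]
  exact hopFold_hopFold_swap_mul (h₃ ▸ nodup_leftA _ _) (by omega)
    (fun h => by have := hgt k h; omega) (fun h => by have := hgt (k + 1) h; omega) y

lemma hopStages_range'_sA_mul {n k : ℕ} {w : Perm ℕ} (hw : InSymm n w) (hk : 1 ≤ k)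
    (hkn : k + 1 ≤ n) (hdesc : w⁻¹ (k + 1) < w⁻¹ k) (x : Perm ℕ) :
    hopStages w (List.range' 1 n) (sA k * x) =
      condSwap k (k + 1) (hopStages (sA k * w) (List.range' 1 n) x) := by
  have hpos := (Finset.mem_Icc.1 (hw.inv_apply_mem (Finset.mem_Icc.2 ⟨by omega, hkn⟩))).1
  have hrange : List.range' 1 n = List.range' 1 (k - 1) ++ [k, k + 1] ++
      List.range' (k + 2) (n - (k + 1)) := by
    rw [show [k, k + 1] = List.range' (1 + (k - 1)) 2 by simp [List.range'_succ]; omega,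
      List.range'_append_1, show k + 2 = 1 + (k - 1 + 2) by omega, List.range'_append_1]
    congr 1
    omega
  rw [hrange, hopStages_append, hopStages_append, hopStages_append, hopStages_append,
    hopStages_sA_mul_of_ne (fun t ht => by rw [List.mem_range'_1] at ht; omega),
    hopStages_pair_sA_mul hpos hdesc,
    hopStages_condSwap_of_lt (fun t ht => by rw [List.mem_range'_1] at ht; omega)]

lemma hopStages_range'_sub_one {n : ℕ} {w : Perm ℕ} (hw : InSymm n w) (x : Perm ℕ) :
    hopStages w (List.range' 1 n) x = hopStages w (List.range' 1 (n - 1)) x := by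
  cases n with
  | zero => rfl
  | succ m =>
    rw [List.range'_1_concat, hopStages_append, Nat.add_sub_cancel, Nat.add_comm]
    change hopFold (m + 1) (leftA w (m + 1)) _ = _
    rw [hw.leftA_eq_nil (Nat.le_add_left 1 m)]
    rfl

theorem demazure_eq_hopStages {n : ℕ} (star : Perm ℕ → Perm ℕ → Perm ℕ)
    (hassoc : ∀ a b c, star (star a b) c = star a (star b c)) (hunit : ∀ a, star 1 a = a)
    (hgen : ∀ k, 1 ≤ k → k + 1 ≤ n → ∀ u,
      star (sA k) u = if lengthA n u < lengthA n (sA k * u) then sA k * u else u)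
    {v : Perm ℕ} (hv : InSymm n v) (w : Perm ℕ) (hw : InSymm n w) :
    star w v = hopStages w (List.range' 1 n) (w * v) := by
  refine InSymm.induction_on_descent (by rw [hunit, hopStages_one, one_mul])
    (fun k w hk hkn hw hdesc ih => ?_) w hw
  have hw' : InSymm n (sA k * w) := (inSymm_sA hk hkn).mul hw
  have hdem (u : Perm ℕ) (hu : InSymm n u) : star (sA k) u = condSwap k (k + 1) u := by
    rw [hgen k hk hkn]
    exact if_congr (hu.lengthA_lt_lengthA_sA_mul_iff hk hkn) rfl rfl
  have hstar : star (sA k) (sA k * w) = w := by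
    rw [hdem _ hw', condSwap_of_lt (by rwa [sA_mul_inv_apply_left, sA_mul_inv_apply_right]),
      ← sA, sA_mul_sA_mul]
  calc star w v = star (sA k) (star (sA k * w) v) := by rw [← hassoc, hstar]
    _ = condSwap k (k + 1) (hopStages (sA k * w) (List.range' 1 n) (sA k * w * v)) := by
      rw [ih, hdem _ (hw'.hopStages (hw'.mul hv) fun t ht => by
        rw [List.mem_range'_1] at ht; exact Finset.mem_Icc.2 (by omega))]
    _ = hopStages w (List.range' 1 n) (w * v) := by
      rw [← hopStages_range'_sA_mul hw hk hkn hdesc, ← mul_assoc, sA_mul_sA_mul]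

/-- for all `w, v ∈ S_n`,
`w ⋆ v = h_{n-1, w↖(n-1)} ∘ ⋯ ∘ h_{2, w↖2} ∘ h_{1, w↖1} (w · v)`,
the hopping operators being applied in the order `h_{1,w↖1}, …, h_{n-1,w↖(n-1)}`
to the ordinary product `w * v`.  The Demazure product `⋆` is encoded as an
arbitrary associative product `star` with unit `1` satisfying the defining
rule on the simple generators of `S_n`. -/
theorem demazure_eq_hopping
    (n : ℕ) (w v : Equiv.Perm ℕ) (hw : InSymm n w) (hv : InSymm n v)
    (star : Equiv.Perm ℕ → Equiv.Perm ℕ → Equiv.Perm ℕ)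
    (hassoc : ∀ a b c, star (star a b) c = star a (star b c))
    (hunit : ∀ a, star 1 a = a)
    (hgen : ∀ k, 1 ≤ k → k + 1 ≤ n → ∀ u,
      star (sA k) u = if lengthA n u < lengthA n (sA k * u) then sA k * u else u) :
    star w v = (List.range (n - 1)).foldl (fun u t => hopA (t + 1) (leftA w (t + 1)) u) (w * v) := by
  rw [demazure_eq_hopStages star hassoc hunit hgen hv w hw, hopStages_range'_sub_one hw,
    hopStages, List.range'_eq_map_range, List.foldl_map]
  congr
  funext u t
  rw [hopA_eq_hopFold (fun _ => lt_of_mem_leftA), Nat.add_comm]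
end

section
/- For any v ∈ B_n and any index 1 ≤ i < n, the Demazure product satisfies s_i ⋆ v = h^B_{i,[i+1]}(s_i · v); moreover s_n ⋆ v = h^B_{n,[−n]}(s_n · v). -/
/-!
We model the group `B_n` of signed permutations as the permutations `w` of `ℤ`
satisfying `w (-i) = -(w i)` that fix every point outside
`±[n] = {1, …, n, -1, …, -n}`.  The unfolding of `w` is the sequence
`w 1, …, w n, -(w n), …, -(w 1)`, indexed by positions `1, …, 2n`; identifying
the position/symbol `n + k` with `-(n + 1 - k)`, the entry of the unfolding at
position `m` is `w (valB n m)`, and the entry `x` sits at position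
`posB n w x`.  The total order `1 < 2 < ⋯ < n < -n < ⋯ < -2 < -1` on `±[n]`
is comparison of `ordVal`.
-/

/-- `w` is a signed permutation in `B_n`. -/
def IsSignedPerm (n : ℕ) (w : Equiv.Perm ℤ) : Prop :=
  (∀ i : ℤ, w (-i) = -(w i)) ∧ ∀ i : ℤ, (n : ℤ) < |i| → w i = i

/-- `x` is an element of `±[n]`. -/
def IsPM (n : ℕ) (x : ℤ) : Prop := x ≠ 0 ∧ |x| ≤ (n : ℤ)

/-- The element of `±[n]` denoted by the symbol `m ∈ {1, …, 2n}`: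
`m` itself if `m ≤ n`, and `-(2n + 1 - m)` otherwise. -/
def valB (n : ℕ) (m : ℕ) : ℤ :=
  if (m : ℤ) ≤ (n : ℤ) then (m : ℤ) else (m : ℤ) - (2 * n + 1)

/-- The rank of `x ∈ ±[n]` in the total order `1 < ⋯ < n < -n < ⋯ < -1`. -/
def ordVal (n : ℕ) (x : ℤ) : ℤ := if 0 < x then x else 2 * n + 1 + x

/-- The simple generators of `B_n`: `s_i` swaps `i ↔ i+1` and `-i ↔ -(i+1)`
for `1 ≤ i < n`, and `s_n` swaps `n ↔ -n`; for `n < i` we use the convention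
`s_{n+j} = s_{n-j}`. -/
def sB (n i : ℕ) : Equiv.Perm ℤ :=
  let j := if i ≤ n then i else 2 * n - i
  if j = n then Equiv.swap (n : ℤ) (-(n : ℤ))
  else Equiv.swap (j : ℤ) ((j : ℤ) + 1) * Equiv.swap (-(j : ℤ)) (-((j : ℤ) + 1))

/-- Swap the values `t ↔ q` and simultaneously `-t ↔ -q` (unless `t = -q`). -/
def bswap (t q : ℤ) : Equiv.Perm ℤ :=
  if t = -q then Equiv.swap t q else Equiv.swap t q * Equiv.swap (-t) (-q)

/-- The position of the entry `x` in the unfolding of `w`. -/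
def posB (n : ℕ) (w : Equiv.Perm ℤ) (x : ℤ) : ℤ := ordVal n (w⁻¹ x)

/-- One step of the type `B` hopping algorithm: among the entries `q` of the
ordered list `L` that are greater than `t` in the order on `±[n]` and appear
strictly to the right of `t` in the unfolding of `w`, pick the one occurring
furthest to the right in `L` (the last one in `L`), swap it with `t` and
simultaneously swap `-q` with `-t`; if there is no such entry, do nothing. -/
def hopStepB (n : ℕ) (t : ℤ) (L : List ℤ) (w : Equiv.Perm ℤ) : Equiv.Perm ℤ :=
  match (L.filter fun q =>
      decide (ordVal n t < ordVal n q ∧ posB n w t < posB n w q)).getLast? with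
  | none => w
  | some q => bswap t q * w

/-- The type `B` hopping operator `h^B_{t,L}`: iterate the hopping step until
the process stops, i.e. until no entry of `L` greater than `t` appears to the
right of `t`.  Each effective step moves `t` strictly to the right among the
`2n` positions of the unfolding, so `2n` iterations always suffice, after
which the step acts as the identity. -/
def hopB (n : ℕ) (t : ℤ) (L : List ℤ) (w : Equiv.Perm ℤ) : Equiv.Perm ℤ :=
  (hopStepB n t L)^[2 * n] w

/-- The product `c^B_{a,b} = s_a s_{a+1} ⋯ s_{a+b-1}` (the identity when
`b = 0`), using the convention `s_{n+j} = s_{n-j}`. -/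
def cB (n a b : ℕ) : Equiv.Perm ℤ := ((List.range b).map fun k => sB n (a + k)).prod

/-- The Coxeter length of an element of `B_n`: the least length of a word in
the simple generators `s_1, …, s_n` expressing it. -/
noncomputable def lengthB (n : ℕ) (w : Equiv.Perm ℤ) : ℕ :=
  sInf {k | ∃ l : List ℕ, l.length = k ∧ (∀ i ∈ l, 1 ≤ i ∧ i ≤ n) ∧ (l.map (sB n)).prod = w}

/-!
The Coxeter length of a signed permutation `w` is its number of inversions: pairs `(x, y)` of
`±[n]` with `x` before `y` and not after `-y`, whose order `w` reverses. Left multiplication by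
`s_i` only exchanges the values `i ↔ t` and `-i ↔ -t`, where `t = s_i(i)` is the successor of `i`
in the order on `±[n]`, so it changes the status of exactly one such pair: `ℓ(s_i w) = ℓ(w) + 1`
if `i` stands left of `t` in the unfolding of `w`, and `ℓ(s_i w) = ℓ(w) - 1` otherwise. Applied
to `s_i v`, the hopping operator `h_{i,[t]}` swaps `t` and `i` back exactly when `t` stands left
of `i`, that is when `ℓ(s_i v) < ℓ(v)`, and otherwise does nothing, which is the defining rule
of `s_i ⋆ v`.
-/

lemma Finset.card_filter_eq_card_filter_add_one {α : Type*} [DecidableEq α] {s : Finset α}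
    {P Q : α → Prop} [DecidablePred P] [DecidablePred Q] {a : α} (ha : a ∈ s) (hPa : ¬P a)
    (hQa : Q a) (h : ∀ b ∈ s, b ≠ a → (Q b ↔ P b)) :
    (s.filter Q).card = (s.filter P).card + 1 := by
  have hins : s.filter Q = insert a (s.filter P) := by
    ext b
    by_cases hb : b = a
    · subst hb
      simp [ha, hQa]
    · simp only [Finset.mem_filter, Finset.mem_insert, hb, false_or]
      exact and_congr_right fun hbs => h b hbs hb
  rw [hins, Finset.card_insert_of_notMem (by simp [hPa])]

lemma eq_natCast_of_lt_succ {f : ℕ → ℤ} {n : ℕ} (hf : ∀ j, 1 ≤ j → j < n → f j < f (j + 1))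
    (h1 : 1 ≤ f 1) (hn : f n ≤ n) {j : ℕ} (hj1 : 1 ≤ j) (hjn : j ≤ n) : f j = j := by
  have chain : ∀ a b : ℕ, 1 ≤ a → a ≤ b → b ≤ n → f a + b ≤ f b + a := by
    intro a b ha hab hb
    induction b, hab using Nat.le_induction with
    | base => rfl
    | succ b hab ih =>
      have := hf b (by omega) (by omega)
      have := ih (by omega)
      push_cast
      omega
  have := chain 1 j le_rfl hj1 hjn
  have := chain j n hj1 hjn le_rfl
  push_cast at *
  omega

section

variable {n i : ℕ} {w : Equiv.Perm ℤ} {x y : ℤ}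

lemma isPM_iff : IsPM n x ↔ x ≠ 0 ∧ -(n : ℤ) ≤ x ∧ x ≤ n := by
  simp [IsPM, abs_le]

lemma IsPM.neg (hx : IsPM n x) : IsPM n (-x) := by
  simpa [IsPM] using hx

lemma isPM_natCast (h1 : 1 ≤ i) (h2 : i ≤ n) : IsPM n (i : ℤ) :=
  isPM_iff.2 ⟨by omega, by omega, by exact_mod_cast h2⟩

lemma ordVal_of_pos (hx : 0 < x) : ordVal n x = x := if_pos hx

lemma ordVal_of_neg (hx : x < 0) : ordVal n x = 2 * n + 1 + x := if_neg (by omega)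

lemma ordVal_neg (hx : x ≠ 0) : ordVal n (-x) = 2 * n + 1 - ordVal n x := by
  unfold ordVal; split_ifs <;> omega

lemma ordVal_mem_Icc (hx : IsPM n x) : 1 ≤ ordVal n x ∧ ordVal n x ≤ 2 * n := by
  rw [isPM_iff] at hx; unfold ordVal; split_ifs <;> omega

lemma ordVal_injOn (hx : IsPM n x) (hy : IsPM n y) (h : ordVal n x = ordVal n y) : x = y := by
  rw [isPM_iff] at hx hy; unfold ordVal at h; split_ifs at h <;> omega

lemma eq_ordVal_of_ordVal_le (hx : IsPM n x) (h : ordVal n x ≤ n) : x = ordVal n x := by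
  rw [isPM_iff] at hx; unfold ordVal at h ⊢; split_ifs at h ⊢ <;> omega

namespace IsSignedPerm

lemma one : IsSignedPerm n 1 := ⟨fun _ => rfl, fun _ _ => rfl⟩

lemma mul {u : Equiv.Perm ℤ} (hu : IsSignedPerm n u) (hw : IsSignedPerm n w) :
    IsSignedPerm n (u * w) :=
  ⟨fun i => by simp [hw.1 i, hu.1 (w i)], fun i hi => by simp [hw.2 i hi, hu.2 i hi]⟩

lemma inv (hw : IsSignedPerm n w) : IsSignedPerm n w⁻¹ :=
  ⟨fun i => by rw [Equiv.Perm.inv_eq_iff_eq, hw.1]; simp,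
   fun i hi => by rw [Equiv.Perm.inv_eq_iff_eq, hw.2 i hi]⟩

lemma apply_zero (hw : IsSignedPerm n w) : w 0 = 0 := by
  have := hw.1 0
  rw [neg_zero] at this
  omega

lemma isPM_apply (hw : IsSignedPerm n w) (hx : IsPM n x) : IsPM n (w x) := by
  refine ⟨fun h => hx.1 (w.injective (h.trans hw.apply_zero.symm)), ?_⟩
  by_contra hbig
  have hfix : w x = x := w.injective (hw.2 (w x) (not_le.1 hbig))
  exact hbig (by rw [hfix]; exact hx.2)

lemma eq_one_of_forall_apply_eq (hw : IsSignedPerm n w)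
    (hfix : ∀ j : ℕ, 1 ≤ j → j ≤ n → w j = j) : w = 1 := by
  have hpos : ∀ x : ℤ, 0 < x → w x = x := fun x hx => by
    rcases le_or_gt x n with hle | hgt
    · simpa [Int.toNat_of_nonneg hx.le] using hfix x.toNat (by omega) (by omega)
    · exact hw.2 x (by rw [abs_of_pos hx]; exact hgt)
  ext x
  rcases lt_trichotomy x 0 with hx | rfl | hx
  · have := hw.1 (-x)
    rwa [neg_neg, hpos (-x) (by omega), neg_neg] at this
  · exact hw.apply_zero
  · exact hpos x hx

end IsSignedPerm

lemma posB_ne_posB (hw : IsSignedPerm n w) (hx : IsPM n x) (hy : IsPM n y) (hne : x ≠ y) :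
    posB n w x ≠ posB n w y := fun h =>
  hne (w⁻¹.injective (ordVal_injOn (hw.inv.isPM_apply hx) (hw.inv.isPM_apply hy) h))

lemma sB_apply_of_lt (h1 : 1 ≤ i) (h : i < n) (x : ℤ) :
    sB n i x = if x = i then (i + 1 : ℤ) else if x = i + 1 then (i : ℤ) else
      if x = -i then -(i + 1 : ℤ) else if x = -(i + 1 : ℤ) then -(i : ℤ) else x := by
  simp only [sB, h.le, if_true, h.ne, if_false, Equiv.Perm.mul_apply, Equiv.swap_apply_def]
  split_ifs <;> omega

lemma sB_self_apply (x : ℤ) :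
    sB n n x = if x = n then -(n : ℤ) else if x = -n then (n : ℤ) else x := by
  simp only [sB, le_refl, if_true, Equiv.swap_apply_def]

lemma sB_apply_self_of_lt (h1 : 1 ≤ i) (h : i < n) : sB n i i = i + 1 := by
  simp [sB_apply_of_lt h1 h]

lemma sB_self_apply_self : sB n n n = -(n : ℤ) := by
  simp [sB_self_apply]

lemma sB_zero_zero : sB 0 0 = 1 := by
  simp [sB, Equiv.Perm.one_def]

lemma sB_mul_self (h1 : 1 ≤ i) (h2 : i ≤ n) : sB n i * sB n i = 1 := by
  ext x
  rcases h2.lt_or_eq with h | rfl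
  · simp only [Equiv.Perm.mul_apply, sB_apply_of_lt h1 h, Equiv.Perm.one_apply]
    split_ifs <;> omega
  · simp only [Equiv.Perm.mul_apply, sB_self_apply, Equiv.Perm.one_apply]
    split_ifs <;> omega

lemma sB_sB_apply (h1 : 1 ≤ i) (h2 : i ≤ n) (x : ℤ) : sB n i (sB n i x) = x := by
  rw [← Equiv.Perm.mul_apply, sB_mul_self h1 h2, Equiv.Perm.one_apply]

lemma sB_inv (h1 : 1 ≤ i) (h2 : i ≤ n) : (sB n i)⁻¹ = sB n i :=
  inv_eq_of_mul_eq_one_right (sB_mul_self h1 h2)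

lemma isSignedPerm_sB (h1 : 1 ≤ i) (h2 : i ≤ n) : IsSignedPerm n (sB n i) := by
  have key : ∀ x, sB n i (-x) = -sB n i x ∧ ((n : ℤ) < x ∨ (n : ℤ) < -x → sB n i x = x) := by
    intro x
    rcases h2.lt_or_eq with h | rfl
    · simp only [sB_apply_of_lt h1 h]
      split_ifs <;> omega
    · simp only [sB_self_apply]
      split_ifs <;> omega
  exact ⟨fun x => (key x).1, fun x hx => (key x).2 (lt_abs.1 hx)⟩

lemma ordVal_lt_ordVal_sB_apply_self (h1 : 1 ≤ i) (h2 : i ≤ n) :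
    ordVal n i < ordVal n (sB n i i) := by
  rcases h2.lt_or_eq with h | rfl
  · rw [sB_apply_self_of_lt h1 h, ordVal_of_pos (by omega), ordVal_of_pos (by omega)]
    omega
  · rw [sB_self_apply_self, ordVal_of_pos (by omega), ordVal_of_neg (by omega)]
    omega

lemma sB_apply_eq_self_or (h1 : 1 ≤ i) (h2 : i ≤ n) (x : ℤ) :
    sB n i x = x ∨ x = i ∨ x = sB n i i ∨ x = -i ∨ x = -sB n i i := by
  rcases h2.lt_or_eq with h | rfl
  · simp only [sB_apply_self_of_lt h1 h, sB_apply_of_lt h1 h]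
    split_ifs <;> omega
  · simp only [sB_self_apply]
    split_ifs <;> omega

lemma abs_ordVal_sB_apply_sub_le (h1 : 1 ≤ i) (h2 : i ≤ n) (hx : IsPM n x) :
    |ordVal n (sB n i x) - ordVal n x| ≤ 1 := by
  rw [isPM_iff] at hx
  rw [abs_le]
  rcases h2.lt_or_eq with h | rfl
  · simp only [sB_apply_of_lt h1 h, ordVal]
    split_ifs <;> omega
  · simp only [sB_self_apply, ordVal]
    split_ifs <;> omega

lemma bswap_sB_apply_self (h1 : 1 ≤ i) (h2 : i ≤ n) : bswap i (sB n i i) = sB n i := by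
  rcases h2.lt_or_eq with h | rfl
  · rw [sB_apply_self_of_lt h1 h, bswap, if_neg (by omega)]
    simp only [sB, h.le, if_true, h.ne, if_false, neg_add]
  · rw [sB_self_apply_self, bswap, if_pos (neg_neg _).symm]
    simp only [sB, le_refl, if_true]

/- `sB n i` moves every rank by at most one, so of two ranks it can only reverse adjacent ones,
and only by exchanging them. -/
lemma ordVal_sB_lt_sB_of_lt (h1 : 1 ≤ i) (h2 : i ≤ n) (hx : IsPM n x) (hy : IsPM n y)
    (hne : sB n i x ≠ y) (hlt : ordVal n x < ordVal n y) :
    ordVal n (sB n i x) < ordVal n (sB n i y) := by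
  have hs := isSignedPerm_sB h1 h2
  have hx' := abs_le.1 (abs_ordVal_sB_apply_sub_le h1 h2 hx)
  have hy' := abs_le.1 (abs_ordVal_sB_apply_sub_le h1 h2 hy)
  have hne₁ : ordVal n (sB n i x) ≠ ordVal n (sB n i y) := fun h => hlt.ne <| congrArg _ <|
    (sB n i).injective (ordVal_injOn (hs.isPM_apply hx) (hs.isPM_apply hy) h)
  have hne₂ : ordVal n (sB n i y) ≠ ordVal n x := fun h => hne <| by
    rw [← ordVal_injOn (hs.isPM_apply hy) hx h, sB_sB_apply h1 h2]
  have hne₃ : ordVal n (sB n i x) ≠ ordVal n y := fun h => hne (ordVal_injOn (hs.isPM_apply hx) hy h)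
  omega

lemma ordVal_sB_lt_sB_iff (h1 : 1 ≤ i) (h2 : i ≤ n) (hx : IsPM n x) (hy : IsPM n y)
    (hne : sB n i x ≠ y) : ordVal n (sB n i x) < ordVal n (sB n i y) ↔ ordVal n x < ordVal n y := by
  have hs := isSignedPerm_sB h1 h2
  refine ⟨fun h => ?_, ordVal_sB_lt_sB_of_lt h1 h2 hx hy hne⟩
  rw [← sB_sB_apply h1 h2 x, ← sB_sB_apply h1 h2 y]
  refine ordVal_sB_lt_sB_of_lt h1 h2 (hs.isPM_apply hx) (hs.isPM_apply hy) (fun h' => hne ?_) h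
  rw [sB_sB_apply h1 h2] at h'
  rw [h', sB_sB_apply h1 h2]

lemma posB_sB_mul (h1 : 1 ≤ i) (h2 : i ≤ n) (w : Equiv.Perm ℤ) (x : ℤ) :
    posB n (sB n i * w) x = posB n w (sB n i x) := by
  rw [posB, posB, mul_inv_rev, sB_inv h1 h2, Equiv.Perm.mul_apply]

lemma posB_sB_mul_lt_iff (h1 : 1 ≤ i) (h2 : i ≤ n) :
    posB n (sB n i * w) i < posB n (sB n i * w) (sB n i i) ↔
      posB n w (sB n i i) < posB n w i := by
  rw [posB_sB_mul h1 h2, posB_sB_mul h1 h2, sB_sB_apply h1 h2]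

lemma posB_ne_posB_sB_apply_self (h1 : 1 ≤ i) (h2 : i ≤ n) (hw : IsSignedPerm n w) :
    posB n w i ≠ posB n w (sB n i i) :=
  have hi := isPM_natCast h1 h2
  posB_ne_posB hw hi ((isSignedPerm_sB h1 h2).isPM_apply hi)
    fun h => (ordVal_lt_ordVal_sB_apply_self h1 h2).ne (congrArg _ h)

/-- The pairs `(x, y)` with `x` before `y` and not after `-y` in the order on `±[n]`: one from
each mirror pair `{(x, y), (-y, -x)}`, so that they index the positive roots of `B_n`. -/
noncomputable def rootPairs (n : ℕ) : Finset (ℤ × ℤ) :=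
  (Finset.Icc (-(n : ℤ)) n ×ˢ Finset.Icc (-(n : ℤ)) n).filter fun p =>
    p.1 ≠ 0 ∧ p.2 ≠ 0 ∧ ordVal n p.1 < ordVal n p.2 ∧ ordVal n p.1 + ordVal n p.2 ≤ 2 * n + 1

noncomputable def invCount (n : ℕ) (w : Equiv.Perm ℤ) : ℕ :=
  ((rootPairs n).filter fun p => ordVal n (w p.2) < ordVal n (w p.1)).card

lemma mem_rootPairs {p : ℤ × ℤ} : p ∈ rootPairs n ↔ IsPM n p.1 ∧ IsPM n p.2 ∧
    ordVal n p.1 < ordVal n p.2 ∧ ordVal n p.1 + ordVal n p.2 ≤ 2 * n + 1 := by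
  simp only [rootPairs, Finset.mem_filter, Finset.mem_product, Finset.mem_Icc, isPM_iff]
  tauto

lemma invCount_one : invCount n 1 = 0 := by
  rw [invCount, Finset.card_eq_zero, Finset.filter_eq_empty_iff]
  exact fun p hp => (mem_rootPairs.1 hp).2.2.1.asymm

lemma mem_rootPairs_or_mirror (hx : IsPM n x) (hy : IsPM n y) (hxy : ordVal n x < ordVal n y) :
    (x, y) ∈ rootPairs n ∨ (-y, -x) ∈ rootPairs n := by
  simp only [mem_rootPairs, ordVal_neg hx.1, ordVal_neg hy.1]
  by_cases hsum : ordVal n x + ordVal n y ≤ 2 * n + 1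
  · exact Or.inl ⟨hx, hy, hxy, hsum⟩
  · exact Or.inr ⟨hy.neg, hx.neg, by omega, by omega⟩

lemma mirror_eq_of_mem_rootPairs (h : (x, y) ∈ rootPairs n) (h' : (-y, -x) ∈ rootPairs n) :
    ((-y, -x) : ℤ × ℤ) = (x, y) := by
  obtain ⟨hx, hy, -, hsum⟩ := mem_rootPairs.1 h
  obtain ⟨-, -, -, hsum'⟩ := mem_rootPairs.1 h'
  dsimp only at hx hy hsum hsum'
  simp only [ordVal_neg hx.1, ordVal_neg hy.1] at hsum'
  have hyx : -y = x := ordVal_injOn hy.neg hx (by rw [ordVal_neg hy.1]; omega)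
  simp [← hyx]

lemma eq_of_mem_rootPairs_of_mem_mirrorPair {p q : ℤ × ℤ} (hp : p ∈ rootPairs n)
    (hq : q ∈ rootPairs n) (hp' : p = (x, y) ∨ p = (-y, -x)) (hq' : q = (x, y) ∨ q = (-y, -x)) :
    p = q := by
  rcases hp' with rfl | rfl <;> rcases hq' with rfl | rfl
  · rfl
  · exact (mirror_eq_of_mem_rootPairs hp hq).symm
  · exact mirror_eq_of_mem_rootPairs hq hp
  · rfl

lemma eq_or_eq_of_sB_apply_eq (h1 : 1 ≤ i) (h2 : i ≤ n) (hw : IsSignedPerm n w)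
    (hasc : posB n w i < posB n w (sB n i i)) {p : ℤ × ℤ} (hp : p ∈ rootPairs n)
    (hflip : sB n i (w p.2) = w p.1) :
    p = (w⁻¹ i, w⁻¹ (sB n i i)) ∨ p = (-w⁻¹ (sB n i i), -w⁻¹ i) := by
  obtain ⟨a, b⟩ := p
  obtain ⟨ha, hb, hab, -⟩ := mem_rootPairs.1 hp
  dsimp only at hflip hab ⊢
  have hs := isSignedPerm_sB h1 h2
  have hmoved : sB n i (w b) ≠ w b := by
    rw [hflip]
    exact fun h => hab.ne (congrArg _ (w.injective h))
  have ha' : a = w⁻¹ (sB n i (w b)) := by rw [hflip]; simp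
  have hb' : b = w⁻¹ (w b) := by simp
  unfold posB at hasc
  rcases (sB_apply_eq_self_or h1 h2 (w b)).resolve_left hmoved with hc | hc | hc | hc <;>
    rw [hc] at ha' hb'
  · rw [ha', hb'] at hab
    exact absurd hasc hab.asymm
  · rw [sB_sB_apply h1 h2] at ha'
    exact Or.inl (by rw [ha', hb'])
  · rw [hs.1, hw.inv.1] at ha'
    rw [hw.inv.1] at hb'
    exact Or.inr (by rw [ha', hb'])
  · rw [hs.1, sB_sB_apply h1 h2, hw.inv.1] at ha'
    rw [hw.inv.1] at hb'
    have hx := hw.inv.isPM_apply (isPM_natCast h1 h2)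
    have hy := hw.inv.isPM_apply (hs.isPM_apply (isPM_natCast (n := n) h1 h2))
    rw [ha', hb', ordVal_neg hx.1, ordVal_neg hy.1] at hab
    omega

/- The only pair of `rootPairs n` whose order `sB n i` reverses is the representative `π` of
`(w⁻¹ i, w⁻¹ (sB n i i))`. -/
lemma invCount_sB_mul_of_posB_lt (h1 : 1 ≤ i) (h2 : i ≤ n) (hw : IsSignedPerm n w)
    (hasc : posB n w i < posB n w (sB n i i)) :
    invCount n (sB n i * w) = invCount n w + 1 := by
  have hs := isSignedPerm_sB h1 h2
  have hi := isPM_natCast h1 h2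
  obtain ⟨π, hπ, hπ'⟩ : ∃ π ∈ rootPairs n, π = (w⁻¹ i, w⁻¹ (sB n i i)) ∨
      π = (-w⁻¹ (sB n i i), -w⁻¹ i) :=
    (mem_rootPairs_or_mirror (hw.inv.isPM_apply hi) (hw.inv.isPM_apply (hs.isPM_apply hi))
      hasc).elim (⟨_, ·, Or.inl rfl⟩) (⟨_, ·, Or.inr rfl⟩)
  have hflip : ordVal n (w π.1) < ordVal n (w π.2) ∧ sB n i (w π.2) = w π.1 := by
    have hlt := ordVal_lt_ordVal_sB_apply_self h1 h2
    rcases hπ' with rfl | rfl <;>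
      simp only [hw.1, Equiv.Perm.coe_inv, Equiv.apply_symm_apply, hs.1, sB_sB_apply h1 h2,
        and_true]
    · exact hlt
    · rw [ordVal_neg (hs.isPM_apply hi).1, ordVal_neg hi.1]
      omega
  unfold invCount
  refine Finset.card_filter_eq_card_filter_add_one hπ (not_lt.2 hflip.1.le) ?_ fun p hp hne => ?_
  · have hflip' : sB n i (w π.1) = w π.2 := by rw [← hflip.2, sB_sB_apply h1 h2]
    rw [Equiv.Perm.mul_apply, Equiv.Perm.mul_apply, hflip.2, hflip']
    exact hflip.1
  · refine ordVal_sB_lt_sB_iff h1 h2 (hw.isPM_apply (mem_rootPairs.1 hp).2.1)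
      (hw.isPM_apply (mem_rootPairs.1 hp).1) fun h => hne ?_
    exact eq_of_mem_rootPairs_of_mem_mirrorPair hp hπ
      (eq_or_eq_of_sB_apply_eq h1 h2 hw hasc hp h) hπ'

lemma invCount_eq_invCount_sB_mul_add_one (h1 : 1 ≤ i) (h2 : i ≤ n) (hw : IsSignedPerm n w)
    (hdes : posB n w (sB n i i) < posB n w i) :
    invCount n w = invCount n (sB n i * w) + 1 := by
  have h := invCount_sB_mul_of_posB_lt h1 h2 ((isSignedPerm_sB h1 h2).mul hw)
    ((posB_sB_mul_lt_iff h1 h2).2 hdes)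
  rwa [← mul_assoc, sB_mul_self h1 h2, one_mul] at h

/- The positions of `1, …, n` increase strictly, so they are `1, …, n`: the last one is at most
`n` because `n` stands left of `-n`, at the mirror position. -/
lemma eq_one_of_forall_posB_lt (hw : IsSignedPerm n w)
    (hasc : ∀ j : ℕ, 1 ≤ j → j ≤ n → posB n w j < posB n w (sB n j j)) : w = 1 := by
  suffices hinv : w⁻¹ = 1 by rw [← inv_inv w, hinv, inv_one]
  refine hw.inv.eq_one_of_forall_apply_eq fun j hj1 hjn => ?_
  have hn : 1 ≤ n := hj1.trans hjn
  have hpos : posB n w j = j := by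
    refine eq_natCast_of_lt_succ (f := fun j => posB n w j) (fun j hj1 hjn => ?_)
      (ordVal_mem_Icc (hw.inv.isPM_apply (isPM_natCast le_rfl hn))).1 ?_ hj1 hjn
    · simpa [sB_apply_self_of_lt hj1 hjn] using hasc j hj1 hjn.le
    · have h := hasc n hn le_rfl
      have hx := hw.inv.isPM_apply (isPM_natCast (n := n) hn le_rfl)
      rw [sB_self_apply_self, posB, posB, hw.inv.1, ordVal_neg hx.1] at h
      unfold posB
      omega
  have hx := hw.inv.isPM_apply (isPM_natCast hj1 hjn)
  rw [eq_ordVal_of_ordVal_le hx (by unfold posB at hpos; omega)]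
  exact hpos

lemma isSignedPerm_prod_sB {l : List ℕ} (hl : ∀ j ∈ l, 1 ≤ j ∧ j ≤ n) :
    IsSignedPerm n (l.map (sB n)).prod := by
  induction l with
  | nil => exact IsSignedPerm.one
  | cons j l ih =>
    rw [List.map_cons, List.prod_cons]
    exact (isSignedPerm_sB (hl j (by simp)).1 (hl j (by simp)).2).mul
      (ih fun k hk => hl k (List.mem_cons_of_mem j hk))

lemma invCount_prod_sB_le {l : List ℕ} (hl : ∀ j ∈ l, 1 ≤ j ∧ j ≤ n) :
    invCount n (l.map (sB n)).prod ≤ l.length := by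
  induction l with
  | nil => simp [invCount_one]
  | cons j l ih =>
    obtain ⟨h1, h2⟩ := hl j (by simp)
    have hl' : ∀ k ∈ l, 1 ≤ k ∧ k ≤ n := fun k hk => hl k (List.mem_cons_of_mem j hk)
    have hw := isSignedPerm_prod_sB hl'
    have ih := ih hl'
    rw [List.map_cons, List.prod_cons, List.length_cons]
    rcases (posB_ne_posB_sB_apply_self h1 h2 hw).lt_or_gt with h | h
    · rw [invCount_sB_mul_of_posB_lt h1 h2 hw h]
      omega
    · have := invCount_eq_invCount_sB_mul_add_one h1 h2 hw h
      omega

lemma exists_word_length_eq_invCount (hw : IsSignedPerm n w) :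
    ∃ l : List ℕ, l.length = invCount n w ∧ (∀ j ∈ l, 1 ≤ j ∧ j ≤ n) ∧ (l.map (sB n)).prod = w := by
  generalize hk : invCount n w = k
  induction k using Nat.strong_induction_on generalizing w with
  | _ k ih =>
    by_cases hasc : ∀ j : ℕ, 1 ≤ j → j ≤ n → posB n w j < posB n w (sB n j j)
    · obtain rfl := eq_one_of_forall_posB_lt hw hasc
      rw [invCount_one] at hk
      exact ⟨[], hk, by simp, rfl⟩
    · push Not at hasc
      obtain ⟨j, h1, h2, hdes⟩ := hasc
      have hk' := invCount_eq_invCount_sB_mul_add_one h1 h2 hw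
        (lt_of_le_of_ne hdes (posB_ne_posB_sB_apply_self h1 h2 hw).symm)
      obtain ⟨l, hlen, hl, hprod⟩ := ih _ (by omega) ((isSignedPerm_sB h1 h2).mul hw) rfl
      refine ⟨j :: l, by simp only [List.length_cons, hlen]; omega, ?_, ?_⟩
      · simpa [h1, h2] using hl
      · rw [List.map_cons, List.prod_cons, hprod, ← mul_assoc, sB_mul_self h1 h2, one_mul]

lemma lengthB_eq_invCount (hw : IsSignedPerm n w) : lengthB n w = invCount n w := by
  obtain ⟨l, hlen, hl, hprod⟩ := exists_word_length_eq_invCount hw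
  refine le_antisymm (Nat.sInf_le ⟨l, hlen, hl, hprod⟩) (le_csInf ⟨_, l, hlen, hl, hprod⟩ ?_)
  rintro k ⟨m, rfl, hm, rfl⟩
  exact invCount_prod_sB_le hm

lemma lengthB_lt_lengthB_sB_mul_iff (h1 : 1 ≤ i) (h2 : i ≤ n) (hw : IsSignedPerm n w) :
    lengthB n w < lengthB n (sB n i * w) ↔ posB n w i < posB n w (sB n i i) := by
  rw [lengthB_eq_invCount hw, lengthB_eq_invCount ((isSignedPerm_sB h1 h2).mul hw)]
  rcases (posB_ne_posB_sB_apply_self h1 h2 hw).lt_or_gt with h | h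
  · simp [invCount_sB_mul_of_posB_lt h1 h2 hw h, h]
  · have := invCount_eq_invCount_sB_mul_add_one h1 h2 hw h
    simp only [h.not_gt, iff_false]
    omega

lemma hopStepB_singleton (h1 : 1 ≤ i) (h2 : i ≤ n) (w : Equiv.Perm ℤ) :
    hopStepB n i [sB n i i] w =
      if posB n w i < posB n w (sB n i i) then sB n i * w else w := by
  have hlt := ordVal_lt_ordVal_sB_apply_self h1 h2
  by_cases h : posB n w i < posB n w (sB n i i) <;>
    simp [hopStepB, hlt, h, bswap_sB_apply_self h1 h2]

lemma hopB_sB_mul (h1 : 1 ≤ i) (h2 : i ≤ n) (hw : IsSignedPerm n w) :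
    hopB n i [sB n i i] (sB n i * w) =
      if lengthB n w < lengthB n (sB n i * w) then sB n i * w else w := by
  rw [hopB]
  split_ifs with hasc <;> rw [lengthB_lt_lengthB_sB_mul_iff h1 h2 hw] at hasc
  · refine Function.iterate_fixed ?_ _
    rw [hopStepB_singleton h1 h2, if_neg ((posB_sB_mul_lt_iff h1 h2).not.2 hasc.asymm)]
  · have hdes := lt_of_le_of_ne (not_lt.1 hasc) (posB_ne_posB_sB_apply_self h1 h2 hw).symm
    obtain ⟨k, hk⟩ : ∃ k, 2 * n = k + 1 := ⟨2 * n - 1, by omega⟩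
    rw [hk, Function.iterate_succ_apply, hopStepB_singleton h1 h2,
      if_pos ((posB_sB_mul_lt_iff h1 h2).2 hdes), ← mul_assoc, sB_mul_self h1 h2, one_mul]
    exact Function.iterate_fixed (by rw [hopStepB_singleton h1 h2, if_neg hasc]) k

end

theorem demazure_simple_hopB_general
    (n : ℕ) (v : Equiv.Perm ℤ) (hv : IsSignedPerm n v)
    (star : Equiv.Perm ℤ → Equiv.Perm ℤ → Equiv.Perm ℤ)
    (hunit : ∀ a, star 1 a = a)
    (hgen : ∀ i, 1 ≤ i → i ≤ n → ∀ u,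
      star (sB n i) u = if lengthB n u < lengthB n (sB n i * u) then sB n i * u else u) :
    (∀ i : ℕ, 1 ≤ i → i < n →
      star (sB n i) v = hopB n (i : ℤ) [(i : ℤ) + 1] (sB n i * v)) ∧
    star (sB n n) v = hopB n (n : ℤ) [-(n : ℤ)] (sB n n * v) := by
  have key : ∀ i, 1 ≤ i → i ≤ n → star (sB n i) v = hopB n i [sB n i i] (sB n i * v) :=
    fun i h1 h2 => by rw [hgen i h1 h2, hopB_sB_mul h1 h2 hv]
  refine ⟨fun i h1 h2 => by rw [key i h1 h2.le, sB_apply_self_of_lt h1 h2], ?_⟩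
  rcases Nat.eq_zero_or_pos n with rfl | hn
  · rw [sB_zero_zero, hunit, one_mul]
    rfl
  · rw [key n hn le_rfl, sB_self_apply_self]

/-- for any `v ∈ B_n`, `s_i ⋆ v = h^B_{i,[i+1]}(s_i · v)` for
`1 ≤ i < n`, and `s_n ⋆ v = h^B_{n,[-n]}(s_n · v)`.  The Demazure product `⋆`
of `B_n` is encoded as an arbitrary associative product with unit `1`
satisfying the defining rule on the simple generators. -/
theorem demazure_simple_hopB
    (n : ℕ) (v : Equiv.Perm ℤ) (hv : IsSignedPerm n v)
    (star : Equiv.Perm ℤ → Equiv.Perm ℤ → Equiv.Perm ℤ)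
    (hassoc : ∀ a b c, star (star a b) c = star a (star b c))
    (hunit : ∀ a, star 1 a = a)
    (hgen : ∀ i, 1 ≤ i → i ≤ n → ∀ u,
      star (sB n i) u = if lengthB n u < lengthB n (sB n i * u) then sB n i * u else u) :
    (∀ i : ℕ, 1 ≤ i → i < n →
      star (sB n i) v = hopB n (i : ℤ) [(i : ℤ) + 1] (sB n i * v)) ∧
    star (sB n n) v = hopB n (n : ℤ) [-(n : ℤ)] (sB n n * v) :=
  demazure_simple_hopB_general n v hv star hunit hgen
end
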